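/- Let N ≤ 4, κ : ℝᴺ → ℝ measurable with κ ≥ 0, μ₁, β > 0, r₁, r₂ > 1, 2 < p₁ < 2 + 4/N, λ₁ ≥ 0. If u₁, u₂ ∈ H¹_rad(ℝᴺ) are smooth with u₁ ≥ 0, u₂ ≥ 0, and −Δu₁ − λ₁u₁ = μ₁u₁^{p₁−1} + r₁βu₁^{r₁−1}u₂^{r₂} + κ(x)u₂, then u₁ ≡ 0. Consequently, if u₁ ≢ 0 then any Lagrange multiplier λ₁ must be negative. -/

import Mathlib

open MeasureTheory Real ContDiff

noncomputable section

/-- The Laplacian of `u : ℝᴺ → ℝ`. -/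
def lap {N : ℕ} (u : EuclideanSpace ℝ (Fin N) → ℝ) (x : EuclideanSpace ℝ (Fin N)) : ℝ :=
  ∑ i, fderiv ℝ (fderiv ℝ u) x (EuclideanSpace.single i 1) (EuclideanSpace.single i 1)


variable {E : Type*} [NormedAddCommGroup E] [NormedSpace ℝ E]

lemma lineDeriv_aux {u : E → ℝ} (hu : ContDiff ℝ ∞ u) (x v : E) (s₀ : ℝ) :
    HasDerivAt (fun s : ℝ => u (x + s • v)) (fderiv ℝ u (x + s₀ • v) v) s₀ := by
  have h1 : HasFDerivAt u (fderiv ℝ u (x + s₀ • v)) (x + s₀ • v) :=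
    (hu.differentiable (by simp) _).hasFDerivAt
  have h2 : HasDerivAt (fun s : ℝ => x + s • v) v s₀ := by
    simpa using ((hasDerivAt_id s₀).smul_const v).const_add x
  exact h1.comp_hasDerivAt s₀ h2

lemma lineDeriv2_aux {u : E → ℝ} (hu : ContDiff ℝ ∞ u) (x v : E) (s₀ : ℝ) :
    HasDerivAt (fun s : ℝ => fderiv ℝ u (x + s • v) v)
      (fderiv ℝ (fderiv ℝ u) (x + s₀ • v) v v) s₀ := by
  have hfd : ContDiff ℝ ∞ (fderiv ℝ u) := hu.fderiv_right (le_of_eq rfl)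
  have h1 : HasFDerivAt (fderiv ℝ u) (fderiv ℝ (fderiv ℝ u) (x + s₀ • v)) (x + s₀ • v) :=
    (hfd.differentiable (by simp) _).hasFDerivAt
  have h2 : HasDerivAt (fun s : ℝ => x + s • v) v s₀ := by
    simpa using ((hasDerivAt_id s₀).smul_const v).const_add x
  have h3 : HasDerivAt (fun s : ℝ => fderiv ℝ u (x + s • v))
      (fderiv ℝ (fderiv ℝ u) (x + s₀ • v) v) s₀ := h1.comp_hasDerivAt s₀ h2
  simpa using h3.clm_apply (hasDerivAt_const s₀ v)

lemma second_dir {u : E → ℝ} (hu : ContDiff ℝ ∞ u) (x v : E) :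
    fderiv ℝ (fderiv ℝ u) x v v = deriv (deriv (fun s : ℝ => u (x + s • v))) 0 := by
  have h1 : deriv (fun s : ℝ => u (x + s • v)) = fun s => fderiv ℝ u (x + s • v) v := by
    funext s; exact (lineDeriv_aux hu x v s).deriv
  rw [h1]
  have := (lineDeriv2_aux hu x v 0).deriv
  rw [this]; simp

variable {N : ℕ}

lemma norm_single_add_single (hN₁ : 1 ≤ N) (i : Fin N) (hi : i ≠ ⟨0, hN₁⟩) (t s : ℝ) :
    ‖(t • EuclideanSpace.single (⟨0, hN₁⟩ : Fin N) (1:ℝ) + s • EuclideanSpace.single i (1:ℝ))‖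
      = Real.sqrt (t ^ 2 + s ^ 2) := by
  have h1 : ‖(t • EuclideanSpace.single (⟨0, hN₁⟩ : Fin N) (1:ℝ) + s • EuclideanSpace.single i (1:ℝ))‖ ^ 2
      = t ^ 2 + s ^ 2 := by
    rw [norm_add_sq_real]
    have hinner : inner ℝ (t • EuclideanSpace.single (⟨0, hN₁⟩ : Fin N) (1:ℝ))
        (s • EuclideanSpace.single i (1:ℝ)) = (0 : ℝ) := by
      rw [inner_smul_left, inner_smul_right, EuclideanSpace.inner_single_left]
      simp [EuclideanSpace.single_apply, Ne.symm hi]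
    rw [hinner]
    have e0 : ‖EuclideanSpace.single (⟨0, hN₁⟩ : Fin N) (1:ℝ)‖ = 1 := by
      simp [EuclideanSpace.norm_single]
    have ei : ‖EuclideanSpace.single i (1:ℝ)‖ = 1 := by
      simp [EuclideanSpace.norm_single]
    rw [norm_smul, norm_smul, e0, ei]
    simp [mul_pow, sq_abs]
  rw [← h1, Real.sqrt_sq_eq_abs, abs_norm]


lemma sqrt_second_deriv {f : ℝ → ℝ} (hf : ContDiff ℝ ∞ f) {t : ℝ} (ht : 0 < t) :
    deriv (deriv (fun s : ℝ => f (Real.sqrt (t ^ 2 + s ^ 2)))) 0 = deriv f t / t := by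
  have hpos : ∀ s : ℝ, 0 < t ^ 2 + s ^ 2 := fun s => by positivity
  have hh : ∀ s : ℝ, HasDerivAt (fun s : ℝ => Real.sqrt (t ^ 2 + s ^ 2))
      (s / Real.sqrt (t ^ 2 + s ^ 2)) s := by
    intro s
    have h1 : HasDerivAt (fun s : ℝ => t ^ 2 + s ^ 2) (2 * s) s := by
      simpa using (hasDerivAt_pow 2 s).const_add (t ^ 2)
    have h2 : HasDerivAt (fun s : ℝ => Real.sqrt (t ^ 2 + s ^ 2))
        (1 / (2 * Real.sqrt (t ^ 2 + s ^ 2)) * (2 * s)) s :=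
      (Real.hasDerivAt_sqrt (hpos s).ne').comp s h1
    convert h2 using 1
    have : Real.sqrt (t ^ 2 + s ^ 2) ≠ 0 := by positivity
    field_simp
  have hd1 : deriv (fun s : ℝ => f (Real.sqrt (t ^ 2 + s ^ 2)))
      = fun s => deriv f (Real.sqrt (t ^ 2 + s ^ 2)) * (s / Real.sqrt (t ^ 2 + s ^ 2)) := by
    funext s
    exact (((hf.differentiable (by simp) _).hasDerivAt).comp s (hh s)).deriv
  rw [hd1]
  have h00 : Real.sqrt (t ^ 2 + 0 ^ 2) = t := by
    rw [show t ^ 2 + 0 ^ 2 = t ^ 2 by ring, Real.sqrt_sq ht.le]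
  have hA : HasDerivAt (fun s : ℝ => deriv f (Real.sqrt (t ^ 2 + s ^ 2)))
      (deriv (deriv f) t * (0 / t)) 0 := by
    have hdf : ContDiff ℝ ∞ (deriv f) := (contDiff_infty_iff_deriv.mp hf).2
    have := ((hdf.differentiable (by simp) _).hasDerivAt).comp 0 (hh 0)
    simpa [h00, Function.comp_def] using this
  have hB : HasDerivAt (fun s : ℝ => s / Real.sqrt (t ^ 2 + s ^ 2))
      ((1 * Real.sqrt (t ^ 2 + 0 ^ 2) - 0 * (0 / Real.sqrt (t ^ 2 + 0 ^ 2)))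
        / (Real.sqrt (t ^ 2 + 0 ^ 2)) ^ 2) 0 := by
    exact (hasDerivAt_id 0).div (hh 0) (by rw [h00]; exact ht.ne')
  have := (hA.mul hB).deriv
  erw [this, h00]
  field_simp
  ring



lemma lap_radial {N : ℕ} (hN₁ : 1 ≤ N) {u : EuclideanSpace ℝ (Fin N) → ℝ}
    (hu : ContDiff ℝ ∞ u) (hrad : ∀ x y, ‖x‖ = ‖y‖ → u x = u y) {t : ℝ} (ht : 0 < t) :
    lap u (t • EuclideanSpace.single (⟨0, hN₁⟩ : Fin N) (1:ℝ))
      = deriv (deriv (fun s : ℝ => u (s • EuclideanSpace.single (⟨0, hN₁⟩ : Fin N) (1:ℝ)))) t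
        + (N - 1 : ℝ) *
          (deriv (fun s : ℝ => u (s • EuclideanSpace.single (⟨0, hN₁⟩ : Fin N) (1:ℝ))) t / t) := by
  set i₀ : Fin N := ⟨0, hN₁⟩ with hi₀
  set e₀ : EuclideanSpace ℝ (Fin N) := EuclideanSpace.single i₀ (1:ℝ) with he₀
  set f : ℝ → ℝ := fun s => u (s • e₀) with hfdef
  have hf : ContDiff ℝ ∞ f := hu.comp (contDiff_id.smul contDiff_const)
  have hurad : ∀ z, u z = f ‖z‖ := by
    intro z
    apply hrad
    rw [norm_smul]
    simp [he₀, EuclideanSpace.norm_single]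
  -- axis term
  have haxis : fderiv ℝ (fderiv ℝ u) (t • e₀) e₀ e₀ = deriv (deriv f) t := by
    rw [second_dir hu (t • e₀) e₀]
    have hcomp : (fun s : ℝ => u (t • e₀ + s • e₀)) = fun s => f (t + s) := by
      funext s; rw [← add_smul]
    rw [hcomp]
    have h1 : deriv (fun s : ℝ => f (t + s)) = fun s => deriv f (t + s) := by
      funext s; exact deriv_comp_const_add f t s
    rw [h1]
    have h2 : deriv (fun s : ℝ => deriv f (t + s)) 0 = deriv (deriv f) (t + 0) :=
      deriv_comp_const_add (deriv f) t 0
    rw [h2, add_zero]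
  -- orthogonal terms
  have horth : ∀ i : Fin N, i ≠ i₀ →
      fderiv ℝ (fderiv ℝ u) (t • e₀) (EuclideanSpace.single i 1) (EuclideanSpace.single i 1)
        = deriv f t / t := by
    intro i hi
    rw [second_dir hu (t • e₀) _]
    have hcomp : (fun s : ℝ => u (t • e₀ + s • EuclideanSpace.single i (1:ℝ)))
        = fun s => f (Real.sqrt (t ^ 2 + s ^ 2)) := by
      funext s
      rw [hurad, norm_single_add_single hN₁ i hi]
    rw [hcomp]
    exact sqrt_second_deriv hf ht
  -- assemble the sum
  unfold lap
  rw [← Finset.add_sum_erase _ _ (Finset.mem_univ i₀)]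
  have hsum : ∑ i ∈ Finset.univ.erase i₀,
      fderiv ℝ (fderiv ℝ u) (t • e₀) (EuclideanSpace.single i 1) (EuclideanSpace.single i 1)
      = (N - 1 : ℝ) * (deriv f t / t) := by
    rw [Finset.sum_congr rfl (fun i hi => horth i (Finset.mem_erase.mp hi).1)]
    rw [Finset.sum_const, Finset.card_erase_of_mem (Finset.mem_univ i₀), Finset.card_univ,
      Fintype.card_fin, nsmul_eq_mul, Nat.cast_sub hN₁]
    norm_num
  rw [hsum, haxis]


lemma deriv_even_zero {f : ℝ → ℝ} (hf : ∀ t, f (-t) = f t) : deriv f 0 = 0 := by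
  have h1 : (fun x : ℝ => f (-x)) = f := funext hf
  have h2 := deriv_comp_neg (f := f) (x := (0:ℝ))
  rw [h1, neg_zero] at h2
  linarith

/-- If `f` is smooth, `deriv f 0 = 0`, and `t * f'' + (N-1) * f' ≤ 0` on `(0,∞)`,
then `deriv f ≤ 0` on `(0,∞)`. -/
lemma deriv_nonpos_of_ode {N : ℕ} (hN₁ : 1 ≤ N) {f : ℝ → ℝ} (hf : ContDiff ℝ ∞ f)
    (h0 : deriv f 0 = 0)
    (hode : ∀ t : ℝ, 0 < t → t * deriv (deriv f) t + (N - 1 : ℝ) * deriv f t ≤ 0) :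
    AntitoneOn (fun t : ℝ => t ^ (N - 1) * deriv f t) (Set.Ici 0)
      ∧ ∀ t : ℝ, 0 < t → deriv f t ≤ 0 := by
  have hdf : ContDiff ℝ ∞ (deriv f) := (contDiff_infty_iff_deriv.mp hf).2
  set φ : ℝ → ℝ := fun t => t ^ (N - 1) * deriv f t with hφ
  have hφd : ∀ t : ℝ, HasDerivAt φ
      (((N-1 : ℕ) : ℝ) * t ^ (N - 1 - 1) * deriv f t + t ^ (N - 1) * deriv (deriv f) t) t := by
    intro t
    exact (hasDerivAt_pow (N-1) t).mul ((hdf.differentiable (by simp) t).hasDerivAt)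
  have hφ0 : φ 0 = 0 := by
    rcases Nat.lt_or_ge N 2 with h2 | h2
    · have hN : N = 1 := by omega
      subst hN; simp [hφ, h0]
    · have : N - 1 ≠ 0 := by omega
      simp [hφ, zero_pow this]
  have hanti : AntitoneOn φ (Set.Ici 0) := by
    apply antitoneOn_of_deriv_nonpos (convex_Ici 0)
    · exact ((continuous_pow (N-1)).mul hdf.continuous).continuousOn
    · intro t ht
      exact (hφd t).differentiableAt.differentiableWithinAt
    · intro t ht
      rw [interior_Ici] at ht
      rw [(hφd t).deriv]
      rcases Nat.lt_or_ge N 2 with h2 | h2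
      · have hN : N = 1 := by omega
        subst hN
        simp only [Nat.sub_self, pow_zero, Nat.cast_zero, zero_mul, one_mul, zero_add]
        have := hode t ht
        simp only [Nat.cast_one, sub_self, zero_mul, add_zero] at this
        have ht' : (0:ℝ) < t := ht
        nlinarith
      · have hNN : N - 1 - 1 = N - 2 := by omega
        have hsplit : t ^ (N - 1) = t ^ (N - 2) * t := by
          rw [← pow_succ]; congr 1; omega
        rw [hNN, hsplit]
        have hkey := hode t ht
        have hcast : ((N - 1 : ℕ) : ℝ) = (N : ℝ) - 1 := by
          rw [Nat.cast_sub hN₁]; norm_num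
        rw [hcast]
        have htn : (0:ℝ) ≤ t ^ (N - 2) := le_of_lt (pow_pos ht _)
        nlinarith [mul_nonneg htn (neg_nonneg.mpr hkey)]
  refine ⟨hanti, ?_⟩
  intro t ht
  have := hanti (Set.self_mem_Ici) (Set.mem_Ici.mpr ht.le) ht.le
  rw [hφ0] at this
  simp only [hφ] at this
  have hpow : 0 < t ^ (N - 1) := pow_pos ht _
  by_contra hcon
  push_neg at hcon
  exact absurd this (not_le.mpr (mul_pos hpow hcon))


lemma mvt_lower_bound {N : ℕ} {f : ℝ → ℝ} (hf : ContDiff ℝ ∞ f) (hnn : ∀ t, 0 ≤ f t)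
    {c t₀ : ℝ} (hc : 0 < c) (ht₀ : 0 < t₀)
    (hφ : ∀ t : ℝ, t₀ ≤ t → t ^ (N - 1) * deriv f t ≤ -c) :
    ∀ r : ℝ, t₀ ≤ r → c * r / (2 * r) ^ (N - 1) ≤ f r := by
  intro r hr
  have hrpos : 0 < r := lt_of_lt_of_le ht₀ hr
  have hlt : r < 2 * r := by linarith
  obtain ⟨ξ, hξ, hslope⟩ := exists_deriv_eq_slope f hlt
    ((hf.continuous).continuousOn)
    (fun x _ => ((hf.differentiable (by simp)) x).differentiableWithinAt)
  have hξpos : 0 < ξ := lt_trans hrpos hξ.1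
  have hξt₀ : t₀ ≤ ξ := le_trans hr hξ.1.le
  have hder : deriv f ξ ≤ -c / ξ ^ (N - 1) := by
    have h1 := hφ ξ hξt₀
    have h2 : (0:ℝ) < ξ ^ (N - 1) := pow_pos hξpos _
    rw [le_div_iff₀ h2]
    linarith [h1]
  have hup : ξ ^ (N - 1) ≤ (2 * r) ^ (N - 1) :=
    pow_le_pow_left₀ hξpos.le hξ.2.le _
  have h2r : (0:ℝ) < (2 * r) ^ (N - 1) := by positivity
  have hcmp : c / (2 * r) ^ (N - 1) ≤ c / ξ ^ (N - 1) :=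
    div_le_div_of_nonneg_left hc.le (pow_pos hξpos _) hup
  -- f r = f (2r) - deriv f ξ * r
  have hfr : f r = f (2 * r) - deriv f ξ * (2 * r - r) := by
    rw [hslope]
    have hne : (2 * r - r) ≠ 0 := by linarith
    field_simp
    ring
  have : c / ξ ^ (N - 1) * r ≤ f r := by
    rw [hfr]
    have hd : deriv f ξ * (2 * r - r) ≤ (-c / ξ ^ (N - 1)) * r := by
      have : (2 * r - r) = r := by ring
      rw [this]
      exact mul_le_mul_of_nonneg_right hder hrpos.le
    have h2 := hnn (2 * r)
    have h3 : -c / ξ ^ (N - 1) * r = -(c / ξ ^ (N - 1) * r) := by ring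
    rw [h3] at hd
    linarith
  calc c * r / (2 * r) ^ (N - 1) = (c / (2 * r) ^ (N - 1)) * r := by ring
    _ ≤ (c / ξ ^ (N - 1)) * r := mul_le_mul_of_nonneg_right hcmp hrpos.le
    _ ≤ f r := this


lemma annulus_calc {N : ℕ} (hN₁ : 1 ≤ N) (hN₄ : N ≤ 4) {c t₀ a : ℝ}
    (hc : 0 < c) (ht₀ : 0 < t₀) (ha : t₀ ≤ a) :
    c ^ 2 * t₀ ^ (4 - N) / 4 ^ (2 * N - 2)
      ≤ (c * a / (2 * (2 * a)) ^ (N - 1)) ^ 2 * ((2 * a) ^ N - a ^ N) := by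
  have hap : 0 < a := lt_of_lt_of_le ht₀ ha
  have hb : (0:ℝ) < (2 * (2 * a)) ^ (N - 1) := by positivity
  have h1 : a ^ N ≤ (2 * a) ^ N - a ^ N := by
    rw [mul_pow]
    have h2 : (2:ℝ) ≤ 2 ^ N := by
      calc (2:ℝ) = 2 ^ 1 := (pow_one 2).symm
      _ ≤ 2 ^ N := pow_le_pow_right₀ one_le_two hN₁
    nlinarith [pow_pos hap N]
  have key : (c * a / (2 * (2 * a)) ^ (N - 1)) ^ 2 * a ^ N
      = c ^ 2 * a ^ (4 - N) / 4 ^ (2 * N - 2) := by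
    have e1 : ((2 * (2 * a)) ^ (N - 1)) ^ 2 = 4 ^ (2 * N - 2) * a ^ (2 * N - 2) := by
      rw [show (2:ℝ) * (2 * a) = 4 * a by ring, mul_pow, mul_pow, ← pow_mul, ← pow_mul]
      have : (N - 1) * 2 = 2 * N - 2 := by omega
      rw [this]
    have e2 : a ^ 2 * a ^ N = a ^ (4 - N) * a ^ (2 * N - 2) := by
      rw [← pow_add, ← pow_add]
      congr 1
      omega
    rw [div_pow, mul_pow, e1]
    field_simp
    rw [e2]
    ring
  have mono : t₀ ^ (4 - N) ≤ a ^ (4 - N) := pow_le_pow_left₀ ht₀.le ha _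
  have hsq : (0:ℝ) ≤ (c * a / (2 * (2 * a)) ^ (N - 1)) ^ 2 := sq_nonneg _
  calc c ^ 2 * t₀ ^ (4 - N) / 4 ^ (2 * N - 2)
      ≤ c ^ 2 * a ^ (4 - N) / 4 ^ (2 * N - 2) := by
        apply div_le_div_of_nonneg_right _ (by positivity)
        nlinarith [sq_nonneg c]
    _ = (c * a / (2 * (2 * a)) ^ (N - 1)) ^ 2 * a ^ N := key.symm
    _ ≤ (c * a / (2 * (2 * a)) ^ (N - 1)) ^ 2 * ((2 * a) ^ N - a ^ N) :=
        mul_le_mul_of_nonneg_left h1 hsq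

open Metric

lemma not_L2_of_lower_bound {N : ℕ} (hN₁ : 1 ≤ N) (hN₄ : N ≤ 4)
    {u : EuclideanSpace ℝ (Fin N) → ℝ} (hcont : Continuous u) (hnn : ∀ x, 0 ≤ u x)
    {c t₀ : ℝ} (hc : 0 < c) (ht₀ : 0 < t₀)
    (hbd : ∀ x : EuclideanSpace ℝ (Fin N), t₀ ≤ ‖x‖ →
      c * ‖x‖ / (2 * ‖x‖) ^ (N - 1) ≤ u x)
    (hL2 : MemLp u 2 (volume : Measure (EuclideanSpace ℝ (Fin N)))) : False := by
  haveI : Nonempty (Fin N) := ⟨⟨0, hN₁⟩⟩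
  haveI : Nontrivial (EuclideanSpace ℝ (Fin N)) := by
    apply nontrivial_of_ne (EuclideanSpace.single ⟨0, hN₁⟩ (1:ℝ)) 0
    intro h
    have h1 : ‖EuclideanSpace.single (⟨0, hN₁⟩ : Fin N) (1:ℝ)‖ = 1 := by
      simp [EuclideanSpace.norm_single]
    rw [h, norm_zero] at h1
    norm_num at h1
  have hfr : Module.finrank ℝ (EuclideanSpace ℝ (Fin N)) = N := finrank_euclideanSpace_fin
  set R : ℕ → ℝ := fun k => t₀ * 2 ^ k with hR
  have hRpos : ∀ k, 0 < R k := fun k => by positivity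
  have hRmono : ∀ k, R k < R (k + 1) := fun k => by
    simp only [hR, pow_succ]
    have h := pow_pos (show (0:ℝ) < 2 by norm_num) k
    nlinarith
  have hRt₀ : ∀ k, t₀ ≤ R k := fun k => by
    simp only [hR]
    have h : (1:ℝ) ≤ 2 ^ k := one_le_pow₀ one_le_two
    nlinarith
  set A : ℕ → Set (EuclideanSpace ℝ (Fin N)) := fun k => ball (0 : EuclideanSpace ℝ (Fin N)) (R (k + 1)) \ closedBall (0 : EuclideanSpace ℝ (Fin N)) (R k) with hA
  have hAmeas : ∀ k, MeasurableSet (A k) :=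
    fun k => measurableSet_ball.diff measurableSet_closedBall
  have hAnorm : ∀ k x, x ∈ A k → R k < ‖x‖ ∧ ‖x‖ < R (k + 1) := by
    intro k x hx
    obtain ⟨h1, h2⟩ := hx
    rw [mem_ball, dist_zero_right] at h1
    rw [mem_closedBall, dist_zero_right, not_le] at h2
    exact ⟨h2, h1⟩
  have hkey : ∀ k l, k < l → Disjoint (A k) (A l) := by
    intro k l h
    rw [Set.disjoint_left]
    intro x hxk hxl
    have h1 := (hAnorm k x hxk).2
    have h2 := (hAnorm l x hxl).1
    have : R (k + 1) ≤ R l := by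
      simp only [hR]
      have h3 : (2:ℝ) ^ (k+1) ≤ 2 ^ l := pow_le_pow_right₀ one_le_two (by omega)
      nlinarith
    linarith
  have hAdisj : Pairwise (Function.onFun Disjoint A) := by
    intro k l hkl
    rcases lt_or_gt_of_ne hkl with h | h
    · exact hkey k l h
    · exact (hkey l k h).symm
  -- measure of annuli
  set v : ℝ := (volume (ball (0 : EuclideanSpace ℝ (Fin N)) 1)).toReal with hv
  have hvpos : 0 < v := by
    rw [hv]
    exact ENNReal.toReal_pos (measure_ball_pos volume (0 : EuclideanSpace ℝ (Fin N)) one_pos).ne' measure_ball_lt_top.ne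
  have hAvol : ∀ k, (volume (A k)).toReal = (R (k+1) ^ N - R k ^ N) * v := by
    intro k
    have hsub : closedBall (0 : EuclideanSpace ℝ (Fin N)) (R k) ⊆ ball (0 : EuclideanSpace ℝ (Fin N)) (R (k+1)) :=
      closedBall_subset_ball (hRmono k)
    rw [hA]
    simp only
    rw [measure_diff hsub measurableSet_closedBall.nullMeasurableSet
      measure_closedBall_lt_top.ne,
      Measure.addHaar_ball _ _ (hRpos (k+1)).le, Measure.addHaar_closedBall _ _ (hRpos k).le,
      hfr, ← ENNReal.sub_mul (fun _ _ => measure_ball_lt_top.ne),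
      ← ENNReal.ofReal_sub _ (by positivity)]
    rw [ENNReal.toReal_mul, ENNReal.toReal_ofReal]
    have : R k ^ N ≤ R (k+1) ^ N := pow_le_pow_left₀ (hRpos k).le (hRmono k).le N
    linarith
  -- lower bound for the integral over each annulus
  set δ : ℝ := c ^ 2 * t₀ ^ (4 - N) / 4 ^ (2 * N - 2) * v with hδ
  have hδpos : 0 < δ := by positivity
  have hint : Integrable (fun x => u x ^ 2) (volume : Measure (EuclideanSpace ℝ (Fin N))) := hL2.integrable_sq
  have hAint : ∀ k, δ ≤ ∫ x in A k, u x ^ 2 := by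
    intro k
    set b : ℝ := c * R k / (2 * R (k+1)) ^ (N - 1) with hb
    have hbpos : 0 < b := by
      rw [hb]; positivity
    have hAfin : volume (A k) ≠ ⊤ :=
      ((measure_mono Set.diff_subset).trans_lt measure_ball_lt_top).ne
    have hlow : ∀ x ∈ A k, b ^ 2 ≤ u x ^ 2 := by
      intro x hx
      obtain ⟨h1, h2⟩ := hAnorm k x hx
      have hxt₀ : t₀ ≤ ‖x‖ := le_trans (hRt₀ k) h1.le
      have hxpos : 0 < ‖x‖ := lt_of_lt_of_le ht₀ hxt₀
      have hbx : b ≤ c * ‖x‖ / (2 * ‖x‖) ^ (N - 1) := by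
        rw [hb]
        apply div_le_div₀ (by positivity)
          (mul_le_mul_of_nonneg_left h1.le hc.le) (by positivity)
        apply pow_le_pow_left₀ (by positivity)
        linarith
      have := le_trans hbx (hbd x hxt₀)
      nlinarith [hnn x]
    calc δ ≤ b ^ 2 * (volume (A k)).toReal := by
          rw [hAvol k, hδ, hb]
          have := annulus_calc hN₁ hN₄ hc ht₀ (hRt₀ k)
          have hR2 : R (k+1) = 2 * R k := by
            simp only [hR, pow_succ]; ring
          rw [hR2]
          nlinarith [this, hvpos]
      _ ≤ ∫ x in A k, u x ^ 2 :=
          by have h := setIntegral_ge_of_const_le (hAmeas k) hAfin hlow hint.integrableOn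
             rw [smul_eq_mul, mul_comm] at h; exact h
  -- partial sums
  have hpartial : ∀ n : ℕ, n * δ ≤ ∫ x, u x ^ 2 := by
    intro n
    have h1 : ∫ x in ⋃ k ∈ Finset.range n, A k, u x ^ 2
        = ∑ k ∈ Finset.range n, ∫ x in A k, u x ^ 2 :=
      integral_biUnion_finset _ (fun k _ => hAmeas k)
        (fun k _ l _ hkl => hAdisj hkl) (fun k _ => hint.integrableOn)
    have h2 : ∑ k ∈ Finset.range n, δ ≤ ∑ k ∈ Finset.range n, ∫ x in A k, u x ^ 2 :=
      Finset.sum_le_sum (fun k _ => hAint k)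
    have h3 : ∫ x in ⋃ k ∈ Finset.range n, A k, u x ^ 2 ≤ ∫ x, u x ^ 2 :=
      setIntegral_le_integral hint (Filter.Eventually.of_forall (fun x => sq_nonneg _))
    calc (n : ℝ) * δ = ∑ _k ∈ Finset.range n, δ := by
          rw [Finset.sum_const, Finset.card_range, nsmul_eq_mul]
      _ ≤ ∑ k ∈ Finset.range n, ∫ x in A k, u x ^ 2 := h2
      _ = ∫ x in ⋃ k ∈ Finset.range n, A k, u x ^ 2 := h1.symm
      _ ≤ ∫ x, u x ^ 2 := h3
  obtain ⟨n, hn⟩ := exists_nat_gt ((∫ x, u x ^ 2) / δ)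
  have := hpartial n
  rw [div_lt_iff₀ hδpos] at hn
  linarith


lemma const_zero_of_L2 {N : ℕ} (hN₁ : 1 ≤ N) {c₀ : ℝ}
    (h : MemLp (fun _ : EuclideanSpace ℝ (Fin N) => c₀) 2
      (volume : Measure (EuclideanSpace ℝ (Fin N)))) : c₀ = 0 := by
  haveI : Nonempty (Fin N) := ⟨⟨0, hN₁⟩⟩
  haveI : Nontrivial (EuclideanSpace ℝ (Fin N)) := by
    apply nontrivial_of_ne (EuclideanSpace.single ⟨0, hN₁⟩ (1:ℝ)) 0
    intro hh
    have h1 : ‖EuclideanSpace.single (⟨0, hN₁⟩ : Fin N) (1:ℝ)‖ = 1 := by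
      simp [EuclideanSpace.norm_single]
    rw [hh, norm_zero] at h1
    norm_num at h1
  by_contra hc
  have huniv : (volume : Measure (EuclideanSpace ℝ (Fin N))) Set.univ = ⊤ :=
    measure_univ_of_isAddLeftInvariant _
  have hμ0 : (volume : Measure (EuclideanSpace ℝ (Fin N))) ≠ 0 := by
    intro h0
    rw [h0] at huniv
    simp at huniv
  have := h.2
  rw [eLpNorm_const c₀ (by norm_num) hμ0, huniv] at this
  have h2 : (⊤ : ENNReal) ^ (1 / (2:ENNReal).toReal) = ⊤ := by
    rw [ENNReal.top_rpow_of_pos (by norm_num)]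
  rw [h2, ENNReal.mul_top (by simpa using hc)] at this
  exact absurd this (lt_irrefl _)



/-- Lemma 2.4: for `N ≤ 4`, `κ ≥ 0`, `lam₁ ≥ 0`, a nonnegative radial `H¹` solution `u₁`
of the first equation must vanish; consequently a nontrivial solution forces `lam₁ < 0`. -/
theorem nonneg_solution_vanishes_kappa_nonneg (N : ℕ) (hN₁ : 1 ≤ N) (hN₄ : N ≤ 4)
    (κ : EuclideanSpace ℝ (Fin N) → ℝ) (hκmeas : Measurable κ) (hκ : ∀ x, 0 ≤ κ x)
    (μ₁ β r₁ r₂ p₁ lam₁ : ℝ) (hμ₁ : 0 < μ₁) (hβ : 0 < β)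
    (hr₁ : 1 < r₁) (hr₂ : 1 < r₂)
    (hp₁ : 2 < p₁) (hp₁' : p₁ < 2 + 4 / (N : ℝ)) (hlam₁ : 0 ≤ lam₁)
    (u₁ u₂ : EuclideanSpace ℝ (Fin N) → ℝ)
    (hsm₁ : ContDiff ℝ (⊤ : ℕ∞) u₁) (hsm₂ : ContDiff ℝ (⊤ : ℕ∞) u₂)
    (hrad₁ : ∀ x y, ‖x‖ = ‖y‖ → u₁ x = u₁ y)
    (hrad₂ : ∀ x y, ‖x‖ = ‖y‖ → u₂ x = u₂ y)
    (hL2₁ : MemLp u₁ 2 (volume : Measure (EuclideanSpace ℝ (Fin N))))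
    (hL2₂ : MemLp u₂ 2 (volume : Measure (EuclideanSpace ℝ (Fin N))))
    (hpos₁ : ∀ x, 0 ≤ u₁ x) (hpos₂ : ∀ x, 0 ≤ u₂ x)
    (heq : ∀ x, -lap u₁ x - lam₁ * u₁ x
        = μ₁ * u₁ x ^ (p₁ - 1) + r₁ * β * u₁ x ^ (r₁ - 1) * u₂ x ^ r₂ + κ x * u₂ x) :
    ∀ x, u₁ x = 0 := by
  have hu : ContDiff ℝ ∞ u₁ := hsm₁.of_le (by simp)
  -- the Laplacian is nonpositive
  have hlap : ∀ x, lap u₁ x ≤ 0 := by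
    intro x
    have h1 : 0 ≤ μ₁ * u₁ x ^ (p₁ - 1) + r₁ * β * u₁ x ^ (r₁ - 1) * u₂ x ^ r₂ + κ x * u₂ x := by
      have a1 : 0 ≤ μ₁ * u₁ x ^ (p₁ - 1) :=
        mul_nonneg hμ₁.le (Real.rpow_nonneg (hpos₁ x) _)
      have a2 : 0 ≤ r₁ * β * u₁ x ^ (r₁ - 1) * u₂ x ^ r₂ :=
        mul_nonneg (mul_nonneg (mul_nonneg (by linarith) hβ.le)
          (Real.rpow_nonneg (hpos₁ x) _)) (Real.rpow_nonneg (hpos₂ x) _)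
      have a3 : 0 ≤ κ x * u₂ x := mul_nonneg (hκ x) (hpos₂ x)
      linarith
    have h2 := heq x
    have h3 : 0 ≤ lam₁ * u₁ x := mul_nonneg hlam₁ (hpos₁ x)
    linarith
  have hlr := fun (t : ℝ) (ht : 0 < t) => lap_radial hN₁ hu hrad₁ ht
  set f : ℝ → ℝ := fun s => u₁ (s • EuclideanSpace.single (⟨0, hN₁⟩ : Fin N) (1:ℝ)) with hfdef
  have hf : ContDiff ℝ ∞ f := hu.comp (contDiff_id.smul contDiff_const)
  have hurad : ∀ z, u₁ z = f ‖z‖ := by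
    intro z
    apply hrad₁
    rw [norm_smul]
    simp [EuclideanSpace.norm_single]
  have hfeven : ∀ t, f (-t) = f t := by
    intro t
    apply hrad₁
    rw [norm_smul, norm_smul]
    simp
  have h0 : deriv f 0 = 0 := deriv_even_zero hfeven
  have hode : ∀ t : ℝ, 0 < t → t * deriv (deriv f) t + (N - 1 : ℝ) * deriv f t ≤ 0 := by
    intro t ht
    have h1 := hlr t ht
    have h2 := hlap (t • EuclideanSpace.single (⟨0, hN₁⟩ : Fin N) (1:ℝ))
    rw [h1] at h2
    have h3 : deriv (deriv f) t + (N - 1 : ℝ) * (deriv f t / t) ≤ 0 := h2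
    have h4 : t * (deriv (deriv f) t + (N - 1 : ℝ) * (deriv f t / t)) ≤ 0 :=
      mul_nonpos_of_nonneg_of_nonpos ht.le h3
    have h5 : t * (deriv (deriv f) t + (N - 1 : ℝ) * (deriv f t / t))
        = t * deriv (deriv f) t + (N - 1 : ℝ) * deriv f t := by
      field_simp
    linarith [h5 ▸ h4]
  obtain ⟨hanti, hnonpos⟩ := deriv_nonpos_of_ode hN₁ hf h0 hode
  by_cases hzero : ∀ t : ℝ, 0 < t → deriv f t = 0
  · -- f is constant; u₁ is a constant, which must be zero by L²
    have hderiv0 : ∀ t : ℝ, deriv f t = 0 := by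
      intro t
      rcases lt_trichotomy t 0 with h | h | h
      · have he : (fun x : ℝ => f (-x)) = f := funext hfeven
        have := deriv_comp_neg (f := f) (x := t)
        rw [he] at this
        rw [this, hzero (-t) (by linarith), neg_zero]
      · rw [h, h0]
      · exact hzero t h
    have hconst := is_const_of_deriv_eq_zero (hf.differentiable (by simp))
      hderiv0
    have hu₁const : u₁ = fun _ => f 0 := by
      funext x
      rw [hurad x]
      exact hconst _ _
    rw [hu₁const] at hL2₁
    have := const_zero_of_L2 hN₁ hL2₁
    intro x
    rw [hu₁const]
    exact this
  · push_neg at hzero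
    obtain ⟨t₀, ht₀pos, ht₀⟩ := hzero
    have hft₀ : deriv f t₀ < 0 := lt_of_le_of_ne (hnonpos t₀ ht₀pos) ht₀
    set c : ℝ := -(t₀ ^ (N - 1) * deriv f t₀) with hc
    have hcpos : 0 < c := by
      rw [hc]
      have := pow_pos ht₀pos (N - 1)
      nlinarith
    have hφbd : ∀ t : ℝ, t₀ ≤ t → t ^ (N - 1) * deriv f t ≤ -c := by
      intro t ht
      have := hanti (Set.mem_Ici.mpr ht₀pos.le)
        (Set.mem_Ici.mpr (le_trans ht₀pos.le ht)) ht
      rw [hc]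
      simpa using this
    have hnn : ∀ t, 0 ≤ f t := fun t => hpos₁ _
    have hlb := mvt_lower_bound hf hnn hcpos ht₀pos hφbd
    have hbd : ∀ x : EuclideanSpace ℝ (Fin N), t₀ ≤ ‖x‖ →
        c * ‖x‖ / (2 * ‖x‖) ^ (N - 1) ≤ u₁ x := by
      intro x hx
      rw [hurad x]
      exact hlb ‖x‖ hx
    exact (not_L2_of_lower_bound hN₁ hN₄ hsm₁.continuous hpos₁ hcpos ht₀pos hbd hL2₁).elim

end
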